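/- For every ε > 0 there is a constant C₀ such that for all C ≥ C₀ and n ≥ 2 the following holds. Let log n ≤ d < n and let G be a graph on N = C·d·n vertices with minimum degree δ(G) ≥ (1+ε)·N/2. Then G contains a spanning subdivision of every n-vertex d-regular graph. -/

import Mathlib

/-- `IsSpanningSubdivisionWith G H f` says that `G` contains a spanning subdivision of `H`
whose branch vertices are given by the injective map `f`: for every edge `ij` of `H` there
is a path in `G` from `f i` to `f j`, these paths are pairwise internally disjoint, their
interiors avoid all branch vertices, and together they cover every vertex of `G`. -/
def IsSpanningSubdivisionWith {V W : Type*} (G : SimpleGraph V) (H : SimpleGraph W)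
    (f : W → V) : Prop :=
  Function.Injective f ∧
  ∃ P : ∀ i j : W, H.Adj i j → G.Walk (f i) (f j),
    (∀ i j (h : H.Adj i j), (P i j h).IsPath) ∧
    (∀ i j (h : H.Adj i j), P j i h.symm = (P i j h).reverse) ∧
    (∀ i j k l (h : H.Adj i j) (h' : H.Adj k l), s(i, j) ≠ s(k, l) →
      ∀ x, x ∈ (P i j h).support → x ∈ (P k l h').support →
        (x = f i ∨ x = f j) ∧ (x = f k ∨ x = f l)) ∧
    (∀ i j (h : H.Adj i j) (k : W), f k ∈ (P i j h).support → k = i ∨ k = j) ∧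
    (∀ x : V, (∃ i j, ∃ h : H.Adj i j, x ∈ (P i j h).support) ∨ ∃ i, x = f i)

/-- `G` contains a spanning subdivision of `H`. -/
def IsSpanningSubdivisionIn {V W : Type*} (G : SimpleGraph V) (H : SimpleGraph W) : Prop :=
  ∃ f : W → V, IsSpanningSubdivisionWith G H f

/-!
The minimum degree is so large that any two vertices of `G` have at least `|H| + e(H)` common
neighbours. Embed the branch vertices arbitrarily and subdivide every edge of `H` but one, `e₀`,
exactly once, through a private common neighbour of its ends (Hall's condition holds trivially).
The path for `e₀` then has to absorb all remaining vertices. These still span a Dirac graph, so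
they carry a Hamiltonian cycle (longest-path argument), and since the neighbourhoods of the two
ends of `e₀` on this cycle have total size exceeding its length, some cycle edge `xy` has `x`
adjacent to one end and `y` to the other: cutting the cycle at `xy` gives the path.
-/

open Finset

section CyclicChain

variable {α : Type*} {r : α → α → Prop}

def IsCyclicChain (r : α → α → Prop) (l : List α) : Prop :=
  l.IsChain r ∧ ∀ x ∈ l.getLast?, ∀ y ∈ l.head?, r x y

theorem IsCyclicChain.append_comm {p q : List α} (h : IsCyclicChain r (p ++ q)) :
    IsCyclicChain r (q ++ p) := by
  rcases List.eq_nil_or_concat' p with rfl | ⟨p', x, rfl⟩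
  · simpa using h
  cases q with
  | nil => simpa using h
  | cons y q' =>
    obtain ⟨hchain, hclose⟩ := h
    obtain ⟨hp, hq, hxy⟩ := List.isChain_append.1 hchain
    refine ⟨List.isChain_append.2 ⟨hq, hp, fun z hz w hw => hclose z ?_ w ?_⟩, ?_⟩
    · rw [List.getLast?_append_of_ne_nil _ (by simp)]
      exact hz
    · cases p' <;> simpa using hw
    · intro z hz w hw
      rw [List.getLast?_append_of_ne_nil _ (by simp)] at hz
      exact hxy z hz w (by simpa using hw)

theorem IsCyclicChain.rotate {l : List α} (h : IsCyclicChain r l) (n : ℕ) :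
    IsCyclicChain r (l.rotate n) := by
  rw [List.rotate_eq_drop_append_take_mod]
  rw [← List.take_append_drop (n % l.length) l] at h
  exact h.append_comm

theorem IsCyclicChain.of_isRotated {l l' : List α} (h : IsCyclicChain r l) (hl : l ~r l') :
    IsCyclicChain r l' := by
  obtain ⟨n, rfl⟩ := hl
  exact h.rotate n

theorem isCyclicChain_append_reverse (hr : ∀ ⦃a b⦄, r a b → r b a) {p q : List α} (hp : p ≠ [])
    (hq : q ≠ []) (h : (p ++ q).IsChain r) (hlast : ∀ x ∈ p.getLast?, ∀ z ∈ q.getLast?, r x z)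
    (hhead : ∀ y ∈ q.head?, ∀ w ∈ p.head?, r y w) : IsCyclicChain r (p ++ q.reverse) := by
  obtain ⟨hpc, hqc, -⟩ := List.isChain_append.1 h
  refine ⟨List.isChain_append.2 ⟨hpc, List.isChain_reverse.2 (hqc.imp fun _ _ h => hr h), ?_⟩, ?_⟩
  · simpa [List.head?_reverse] using hlast
  · intro y hy w hw
    rw [List.getLast?_append_of_ne_nil _ (by simpa using hq), List.getLast?_reverse] at hy
    rw [List.head?_append_of_ne_nil _ hp] at hw
    exact hhead y hy w hw

theorem IsCyclicChain.exists_isRotated_isChain_cons {c : List α}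
    (hc : IsCyclicChain r c) {u w : α} (hu : u ∈ c) (hwu : r w u) :
    ∃ c', c ~r c' ∧ (w :: c').IsChain r := by
  obtain ⟨s, t, rfl⟩ := List.append_of_mem hu
  refine ⟨u :: t ++ s, List.isRotated_append, List.isChain_cons.2 ⟨by simpa using hwu, ?_⟩⟩
  exact hc.append_comm.1

end CyclicChain

section CountP

variable {α : Type*}

theorem List.exists_append_cons_cons_of_countP {p q : α → Bool} :
    ∀ {l : List α}, l.length - 1 < l.dropLast.countP p + l.tail.countP q →
      ∃ s x y t, l = s ++ x :: y :: t ∧ p x ∧ q y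
  | [] | [_] => by simp
  | x :: y :: t => by
    intro h
    -- the pair `(x, y)` contributes at most one to the right-hand side unless `p x ∧ q y`
    by_cases hxy : p x ∧ q y
    · exact ⟨[], x, y, t, rfl, hxy⟩
    obtain ⟨s, x', y', t', he, hx', hy'⟩ :=
      exists_append_cons_cons_of_countP (p := p) (q := q) (l := y :: t) (by
        simp only [List.dropLast_cons_cons, List.tail_cons, List.countP_cons,
          List.length_cons] at h ⊢
        split_ifs at h <;> simp_all <;> omega)
    exact ⟨x :: s, x', y', t', by rw [he]; rfl, hx', hy'⟩

theorem List.exists_isRotated_of_countP {p q : α → Bool} {c : List α} (hc : c ≠ [])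
    (h : c.length < c.countP p + c.countP q) :
    ∃ c', c ~r c' ∧ (∀ x ∈ c'.getLast?, p x) ∧ ∀ y ∈ c'.head?, q y := by
  obtain ⟨a, t₀, rfl⟩ := List.exists_cons_of_ne_nil hc
  -- the consecutive pairs of `c ++ [a]` are the cyclically consecutive pairs of `c`
  obtain ⟨s, x, y, t, he, hx, hy⟩ :=
    exists_append_cons_cons_of_countP (p := p) (q := q) (l := a :: t₀ ++ [a]) (by
      simp only [List.dropLast_concat, List.tail_append_of_ne_nil (List.cons_ne_nil a t₀),
        List.tail_cons, List.countP_append, List.countP_cons, List.length_append,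
        List.length_cons, List.countP_nil, List.length_nil] at h ⊢
      omega)
  rcases List.eq_nil_or_concat' t with rfl | ⟨t', z, rfl⟩
  · rw [show s ++ [x, y] = (s ++ [x]) ++ [y] by simp] at he
    obtain ⟨hs, hy'⟩ := List.append_inj' he rfl
    refine ⟨_, List.IsRotated.refl _, ?_, ?_⟩
    · simpa [hs] using hx
    · simp_all
  · rw [show s ++ x :: y :: (t' ++ [z]) = (s ++ x :: y :: t') ++ [z] by simp] at he
    obtain ⟨he, -⟩ := List.append_inj' he rfl
    refine ⟨(y :: t') ++ (s ++ [x]), ?_, ?_, by simpa using hy⟩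
    · rw [he, show s ++ x :: y :: t' = (s ++ [x]) ++ (y :: t') by simp]
      exact List.isRotated_append
    · rw [List.getLast?_append_of_ne_nil _ (by simp)]
      simpa using hx

theorem Finset.card_le_countP {A : Finset α} {l : List α} {p : α → Bool}
    (h : ∀ x ∈ A, x ∈ l ∧ p x) : #A ≤ l.countP p := by
  classical
  calc #A ≤ #(l.filter p).toFinset := card_le_card fun x hx => by simpa using h x hx
    _ ≤ (l.filter p).length := List.toFinset_card_le _
    _ = l.countP p := List.countP_eq_length_filter.symm

end CountP

theorem Finset.exists_injective_mem_of_card_le {ι α : Type*} (s : Finset ι) (t : ι → Finset α)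
    (h : ∀ i ∈ s, #s ≤ #(t i)) : ∃ g : s → α, Function.Injective g ∧ ∀ i : s, g i ∈ t i := by
  classical
  refine (all_card_le_biUnion_card_iff_exists_injective fun i : s => t i).1 fun u => ?_
  rcases u.eq_empty_or_nonempty with rfl | ⟨i, hi⟩
  · simp
  calc #u ≤ #s := by simpa using card_le_univ u
    _ ≤ #(t i) := h i i.2
    _ ≤ #(u.biUnion fun i => t i) := card_le_card (subset_biUnion_of_mem (fun i : s => t i) hi)

namespace SimpleGraph

variable {V W : Type*} {G : SimpleGraph V} {H : SimpleGraph W} {f : W → V} {I : Sym2 W → Set V}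

theorem exists_perm_isCyclicChain [DecidableRel G.Adj] {l : List V} (hl : l.IsChain G.Adj)
    {a z : V} (ha : a ∈ l.head?) (hz : z ∈ l.getLast?)
    (h : l.length ≤ l.countP (G.Adj a ·) + l.countP (G.Adj · z)) :
    ∃ c, c.Perm l ∧ IsCyclicChain G.Adj c := by
  have htail : l.tail.countP (G.Adj a ·) = l.countP (G.Adj a ·) := by
    conv_rhs => rw [← List.cons_head?_tail ha]
    simp
  have hdropLast : l.dropLast.countP (G.Adj · z) = l.countP (G.Adj · z) := by
    conv_rhs => rw [← List.dropLast_append_getLast? z hz]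
    simp
  have hne : l ≠ [] := by rintro rfl; simp at ha
  -- for consecutive `x, y` with `x ~ z` and `a ~ y`, the cycle is `a … x z … y`
  obtain ⟨s, x, y, t, rfl, hxz, hay⟩ := List.exists_append_cons_cons_of_countP (l := l)
    (p := (G.Adj · z)) (q := (G.Adj a ·)) (by
      have := List.length_pos_iff.2 hne
      omega)
  refine ⟨(s ++ [x]) ++ (y :: t).reverse, ?_, ?_⟩
  · simpa using (List.reverse_perm (y :: t)).append_left (s ++ [x])
  · refine isCyclicChain_append_reverse (fun _ _ h => h.symm) (by simp) (by simp)
      (by simpa using hl) ?_ ?_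
    · intro x' hx' z' hz'
      rw [List.getLast?_append_of_ne_nil _ (by simp)] at hz
      simp_all
    · intro y' hy' w hw
      rw [show s ++ x :: y :: t = (s ++ [x]) ++ (y :: t) by simp,
        List.head?_append_of_ne_nil _ (by simp)] at ha
      simp_all [G.adj_comm]

theorem exists_perm_isCyclicChain_of_maximal [Fintype V] [DecidableEq V] [DecidableRel G.Adj]
    {S : Finset V} (h : ∀ v ∈ S, #S ≤ 2 * #(G.neighborFinset v ∩ S)) {l : List V} (hl : l ≠ [])
    (hnodup : l.Nodup) (hchain : l.IsChain G.Adj) (hlS : ∀ x ∈ l, x ∈ S)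
    (hmax : ∀ t : List V, t.Nodup → t.IsChain G.Adj → (∀ x ∈ t, x ∈ S) → t.length ≤ l.length) :
    ∃ c, c.Perm l ∧ IsCyclicChain G.Adj c := by
  have hclosed (t : List V) (hnodup : t.Nodup) (hchain : t.IsChain G.Adj)
      (htS : ∀ x ∈ t, x ∈ S) (hlen : l.length ≤ t.length) (a : V) (ha : a ∈ t.head?)
      (w : V) (hw : w ∈ S) (haw : G.Adj a w) : w ∈ t := by
    by_contra hwt
    have := hmax (w :: t) (List.nodup_cons.2 ⟨hwt, hnodup⟩)
      (List.isChain_cons.2 ⟨fun y hy => by simp_all [G.adj_comm], hchain⟩)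
      (by simpa [hw] using htS)
    simp at this
    omega
  obtain ⟨a, ha⟩ : ∃ a, a ∈ l.head? := ⟨_, List.head?_eq_some_head hl⟩
  obtain ⟨z, hz⟩ : ∃ z, z ∈ l.getLast? := ⟨_, List.getLast?_eq_some_getLast hl⟩
  have hNa : #(G.neighborFinset a ∩ S) ≤ l.countP (G.Adj a ·) := by
    refine card_le_countP fun w hw => ?_
    rw [mem_inter, mem_neighborFinset] at hw
    exact ⟨hclosed l hnodup hchain hlS le_rfl a ha w hw.2 hw.1, by simpa using hw.1⟩
  have hNz : #(G.neighborFinset z ∩ S) ≤ l.countP (G.Adj · z) := by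
    refine card_le_countP fun w hw => ?_
    rw [mem_inter, mem_neighborFinset] at hw
    refine ⟨?_, by simpa [G.adj_comm] using hw.1⟩
    simpa using hclosed l.reverse (List.nodup_reverse.2 hnodup)
      (List.isChain_reverse.2 (hchain.imp fun _ _ h => h.symm)) (by simpa using hlS) (by simp)
      z (by simpa [List.head?_reverse] using hz) w hw.2 hw.1
  have hlen : l.length ≤ #S := by
    rw [← List.toFinset_card_of_nodup hnodup]
    exact card_le_card fun x hx => hlS x (List.mem_toFinset.1 hx)
  have := h a (hlS a (List.mem_of_mem_head? ha))
  have := h z (hlS z (List.mem_of_mem_getLast? hz))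
  exact exists_perm_isCyclicChain hchain ha hz (by omega)

theorem subset_of_forall_adj_mem [Fintype V] [DecidableEq V] [DecidableRel G.Adj] {S C : Finset V}
    (h : ∀ v ∈ S, #S ≤ 2 * #(G.neighborFinset v ∩ S)) (hCS : C ⊆ S) (hC : C.Nonempty)
    (hclosed : ∀ u ∈ C, ∀ w ∈ S, G.Adj u w → w ∈ C) : S ⊆ C := by
  intro x hxS
  by_contra hxC
  -- `u ∈ C` and `x ∉ C` with their `S`-neighbourhoods would be more than `#S` vertices of `S`
  obtain ⟨u, hu⟩ := hC
  have hu' : insert u (G.neighborFinset u ∩ S) ⊆ C := by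
    intro w hw
    rw [mem_insert, mem_inter, mem_neighborFinset] at hw
    rcases hw with rfl | ⟨huw, hw⟩
    exacts [hu, hclosed u hu w hw huw]
  have hx' : insert x (G.neighborFinset x ∩ S) ⊆ S \ C := by
    intro w hw
    rw [mem_insert, mem_inter, mem_neighborFinset] at hw
    rw [mem_sdiff]
    rcases hw with rfl | ⟨hxw, hw⟩
    exacts [⟨hxS, hxC⟩, ⟨hw, fun hwC => hxC (hclosed w hwC x hxS hxw.symm)⟩]
  have := card_le_card hu'
  have := card_le_card hx'
  have := h u (hCS hu)
  have := h x hxS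
  rw [card_insert_of_notMem (by simp)] at *
  have := card_sdiff_add_card_eq_card hCS
  omega

theorem exists_isCyclicChain_of_le_two_mul [Fintype V] [DecidableEq V] [DecidableRel G.Adj]
    (S : Finset V) (hS : S.Nonempty) (h : ∀ v ∈ S, #S ≤ 2 * #(G.neighborFinset v ∩ S)) :
    ∃ c : List V, c.Nodup ∧ (∀ x, x ∈ c ↔ x ∈ S) ∧ IsCyclicChain G.Adj c := by
  let P (t : List V) : Prop := t.Nodup ∧ t.IsChain G.Adj ∧ ∀ x ∈ t, x ∈ S
  have hlen (t : List V) (ht : P t) : t.length ≤ #S := by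
    rw [← List.toFinset_card_of_nodup ht.1]
    exact card_le_card fun x hx => ht.2.2 x (List.mem_toFinset.1 hx)
  obtain ⟨v, hv⟩ := hS
  obtain ⟨l, ⟨hnodup, hchain, hlS⟩, hmax⟩ := Set.exists_max_image {t | P t} List.length
    ((List.finite_length_le V #S).subset hlen) ⟨[v], by simp [P, hv]⟩
  have hl : l ≠ [] := by
    rintro rfl
    simpa using hmax [v] (by simp [P, hv])
  obtain ⟨c, hcl, hc⟩ := exists_perm_isCyclicChain_of_maximal h hl hnodup hchain hlS
    fun t h₁ h₂ h₃ => hmax t ⟨h₁, h₂, h₃⟩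
  have hcnodup : c.Nodup := hcl.nodup_iff.2 hnodup
  have hcS (x : V) (hx : x ∈ c) : x ∈ S := hlS x (hcl.mem_iff.1 hx)
  -- otherwise the cycle could be opened up into a path longer than `l`
  have hclosed (u : V) (hu : u ∈ c) : ∀ w ∈ S, G.Adj u w → w ∈ c := by
    intro w hw huw
    by_contra hwc
    obtain ⟨c', hcc', hchain'⟩ := hc.exists_isRotated_isChain_cons hu huw.symm
    have := hmax (w :: c') ⟨List.nodup_cons.2 ⟨fun h => hwc (hcc'.mem_iff.2 h),
      hcc'.nodup_iff.1 hcnodup⟩, hchain', by simpa [hw, ← hcc'.mem_iff] using hcS⟩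
    simp [← hcc'.perm.length_eq, hcl.length_eq] at this
  obtain ⟨u, hu⟩ := List.exists_mem_of_ne_nil c fun h => hl (List.nil_perm.1 (h ▸ hcl))
  have hSc := subset_of_forall_adj_mem h (C := c.toFinset) (fun x hx => hcS x (by simpa using hx))
    ⟨u, by simpa using hu⟩ (by simpa using hclosed)
  exact ⟨c, hcnodup, fun x => ⟨hcS x, fun hx => by simpa using hSc hx⟩, hc⟩

theorem exists_walk_support_eq {a b : V} {l : List V} (h : (a :: (l ++ [b])).IsChain G.Adj) :
    ∃ p : G.Walk a b, p.support = a :: (l ++ [b]) :=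
  ⟨(Walk.ofSupport _ (List.cons_ne_nil _ _) h).copy List.head_cons (by simp),
    by rw [Walk.support_copy, Walk.support_ofSupport]⟩

theorem exists_isPath_support_iff [Fintype V] [DecidableEq V] [DecidableRel G.Adj]
    (S : Finset V) {a b : V} (ha : a ∉ S) (hb : b ∉ S) (hab : a ≠ b)
    (hS : ∀ v ∈ S, #S ≤ 2 * #(G.neighborFinset v ∩ S))
    (hends : #S < #(G.neighborFinset a ∩ S) + #(G.neighborFinset b ∩ S)) :
    ∃ p : G.Walk a b, p.IsPath ∧ ∀ x, x ∈ p.support ↔ x = a ∨ x = b ∨ x ∈ S := by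
  have hSne : S.Nonempty := by
    by_contra h
    simp [not_nonempty_iff_eq_empty.1 h] at hends
  obtain ⟨c, hnodup, hmem, hc⟩ := exists_isCyclicChain_of_le_two_mul S hSne hS
  have hc0 : c ≠ [] := by
    rintro rfl
    obtain ⟨v, hv⟩ := hSne
    simpa using (hmem v).2 hv
  have hcount (v : V) (p : V → Bool) (hp : ∀ w ∈ S, G.Adj v w → p w) :
      #(G.neighborFinset v ∩ S) ≤ c.countP p :=
    card_le_countP fun w hw => by
      rw [mem_inter, mem_neighborFinset] at hw
      exact ⟨(hmem w).2 hw.2, hp w hw.2 hw.1⟩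
  obtain ⟨c', hcc', hlast, hhead⟩ := List.exists_isRotated_of_countP (c := c)
    (p := (G.Adj · b)) (q := (G.Adj a ·))
    hc0 (by
      have hlen : c.length = #S := by
        rw [← List.toFinset_card_of_nodup hnodup]
        congr 1
        ext x
        simp [hmem]
      have := hcount a (G.Adj a ·) (by simp)
      have := hcount b (G.Adj · b) (fun w _ h => by simpa [G.adj_comm] using h)
      omega)
  have hc' : c' ≠ [] := fun h => hc0 (List.isRotated_nil_iff.1 (h ▸ hcc'))
  have hchain : (a :: (c' ++ [b])).IsChain G.Adj := by
    refine List.isChain_cons.2 ⟨fun y hy => ?_,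
      List.isChain_append.2 ⟨(hc.of_isRotated hcc').1, by simp, fun x hx y hy => ?_⟩⟩
    · rw [List.head?_append_of_ne_nil _ hc'] at hy
      simpa using hhead y hy
    · simp only [List.head?_cons, Option.mem_def, Option.some.injEq] at hy
      simpa [hy] using hlast x hx
  obtain ⟨p, hp⟩ := exists_walk_support_eq hchain
  refine ⟨p, Walk.IsPath.mk' ?_, fun x => ?_⟩
  · have hc'S : ∀ x, x ∈ c' ↔ x ∈ S := fun x => hcc'.mem_iff.symm.trans (hmem x)
    rw [hp, List.nodup_cons, List.nodup_append]
    simp [hc'S, ha, hb, hab, hcc'.nodup_iff.1 hnodup]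
  · rw [hp]
    simp [← hcc'.mem_iff, hmem]
    tauto

theorem exists_reverse_compatible_paths [LinearOrder W]
    (hpath : ∀ i j, H.Adj i j → ∃ p : G.Walk (f i) (f j),
      p.IsPath ∧ ∀ x, x ∈ p.support ↔ x = f i ∨ x = f j ∨ x ∈ I s(i, j)) :
    ∃ P : ∀ i j, H.Adj i j → G.Walk (f i) (f j), (∀ i j h, P j i h.symm = (P i j h).reverse) ∧
      ∀ i j h, (P i j h).IsPath ∧
        ∀ x, x ∈ (P i j h).support ↔ x = f i ∨ x = f j ∨ x ∈ I s(i, j) := by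
  choose Q hQ using hpath
  -- the order on `W` picks one orientation of each edge
  refine ⟨fun i j h => if i < j then Q i j h else (Q j i h.symm).reverse, fun i j h => ?_,
    fun i j h => ?_⟩
  · rcases lt_trichotomy i j with hij | rfl | hij
    · simp [hij, hij.not_gt]
    · exact absurd h H.irrefl
    · simp [hij, hij.not_gt]
  · dsimp only
    split_ifs
    · exact hQ i j h
    · refine ⟨(hQ j i h.symm).1.reverse, fun x => ?_⟩
      rw [Walk.support_reverse, List.mem_reverse, (hQ j i h.symm).2, Sym2.eq_swap]
      tauto

theorem isSpanningSubdivisionWith_of_interiors [LinearOrder W] (hf : Function.Injective f)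
    (hpath : ∀ i j, H.Adj i j → ∃ p : G.Walk (f i) (f j),
      p.IsPath ∧ ∀ x, x ∈ p.support ↔ x = f i ∨ x = f j ∨ x ∈ I s(i, j))
    (hdisj : H.edgeSet.PairwiseDisjoint I) (hf_notMem : ∀ e ∈ H.edgeSet, ∀ i, f i ∉ I e)
    (hcover : ∀ x, (∃ e ∈ H.edgeSet, x ∈ I e) ∨ ∃ i, x = f i) :
    IsSpanningSubdivisionWith G H f := by
  obtain ⟨P, hsymm, hP⟩ := exists_reverse_compatible_paths hpath
  refine ⟨hf, P, fun i j h => (hP i j h).1, hsymm, ?_, ?_, ?_⟩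
  · intro i j k l h h' hne x hx hx'
    rw [(hP i j h).2] at hx
    rw [(hP k l h').2] at hx'
    have hdisj' : Disjoint (I s(i, j)) (I s(k, l)) := hdisj h h' hne
    have hij : x ∉ I s(i, j) := fun hxI => by
      rcases hx' with rfl | rfl | hx'
      iterate 2 exact hf_notMem _ h _ hxI
      exact Set.disjoint_left.1 hdisj' hxI hx'
    have hkl : x ∉ I s(k, l) := fun hxI => by
      rcases hx with rfl | rfl | hx
      iterate 2 exact hf_notMem _ h' _ hxI
      exact Set.disjoint_left.1 hdisj' hx hxI
    tauto
  · intro i j h k hk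
    rw [(hP i j h).2] at hk
    rcases hk with hk | hk | hk
    · exact Or.inl (hf hk)
    · exact Or.inr (hf hk)
    · exact absurd hk (hf_notMem _ h k)
  · intro x
    rcases hcover x with ⟨e, he, hx⟩ | hx
    · left
      induction e using Sym2.inductionOn with
      | hf i j => exact ⟨i, j, he, by simp [(hP i j he).2, hx]⟩
    · exact Or.inr hx

section Degree

variable [Fintype V] [DecidableEq V] [DecidableRel G.Adj]

theorem card_lt_two_mul_card_neighborFinset_inter {S : Finset V} {v : V}
    (h : Fintype.card V + #Sᶜ < 2 * G.degree v) : #S < 2 * #(G.neighborFinset v ∩ S) := by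
  have hsdiff : #(G.neighborFinset v \ S) ≤ #Sᶜ :=
    card_le_card fun x hx => mem_compl.2 (mem_sdiff.1 hx).2
  have hdeg := card_inter_add_card_sdiff (G.neighborFinset v) S
  rw [card_neighborFinset_eq_degree] at hdeg
  have := card_compl_add_card S
  omega

theorem degree_add_degree_le_card_add_card_inter (u v : V) :
    G.degree u + G.degree v ≤ Fintype.card V + #(G.neighborFinset u ∩ G.neighborFinset v) := by
  rw [← card_neighborFinset_eq_degree, ← card_neighborFinset_eq_degree,
    ← card_union_add_card_inter]
  gcongr
  exact card_le_univ _

end Degree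

theorem exists_injective_commonNeighbor [Fintype V] [DecidableEq V] [DecidableRel G.Adj]
    [Fintype W] (f : W → V) (E : Finset (Sym2 W))
    (h : ∀ i j, Fintype.card W + #E ≤ #(G.neighborFinset (f i) ∩ G.neighborFinset (f j))) :
    ∃ g : E → V, Function.Injective g ∧
      ∀ e : E, g e ∉ Set.range f ∧ ∀ i ∈ (e : Sym2 W), G.Adj (f i) (g e) := by
  classical
  obtain ⟨g, hg, hgt⟩ := exists_injective_mem_of_card_le E
    (fun e => {x ∈ univ \ univ.image f | ∀ i ∈ e, G.Adj (f i) x}) fun e _ => by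
      induction e using Sym2.inductionOn with
      | hf i j =>
        calc #E ≤ #(G.neighborFinset (f i) ∩ G.neighborFinset (f j)) - #(univ.image f) := by
              have := h i j
              have : #(univ.image f) ≤ Fintype.card W := card_image_le
              omega
          _ ≤ _ := (le_card_sdiff _ _).trans (card_le_card fun x hx => by simp_all)
  exact ⟨g, hg, fun e => by simpa using hgt e⟩

theorem isSpanningSubdivisionWith_of_midpoints [LinearOrder W] [Fintype H.edgeSet]
    (hf : Function.Injective f) {e₀ : Sym2 W} (he₀ : e₀ ∈ H.edgeSet)
    (g : H.edgeFinset.erase e₀ → V) (hg : Function.Injective g)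
    (hgf : ∀ e, g e ∉ Set.range f)
    (hgadj : ∀ e : H.edgeFinset.erase e₀, ∀ i ∈ (e : Sym2 W), G.Adj (f i) (g e))
    (hlong : ∀ i j, s(i, j) = e₀ → ∃ p : G.Walk (f i) (f j), p.IsPath ∧
      ∀ x, x ∈ p.support ↔ x = f i ∨ x = f j ∨ x ∉ Set.range g ∪ Set.range f) :
    IsSpanningSubdivisionWith G H f := by
  classical
  set R : Set V := (Set.range g ∪ Set.range f)ᶜ
  have hgR (e : H.edgeFinset.erase e₀) : g e ∉ R := by simp [R]
  have hedge {e} (he : e ∈ H.edgeSet) (heE : e ∉ H.edgeFinset.erase e₀) : e = e₀ := by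
    simpa [mem_edgeFinset.2 he] using heE
  refine isSpanningSubdivisionWith_of_interiors hf
    (I := fun e => if he : e ∈ H.edgeFinset.erase e₀ then {g ⟨e, he⟩} else R)
    (fun i j h => ?_) ?_ ?_ ?_
  · by_cases he : s(i, j) ∈ H.edgeFinset.erase e₀
    · have hi := hgadj ⟨_, he⟩ i (Sym2.mem_mk_left i j)
      have hj := hgadj ⟨_, he⟩ j (Sym2.mem_mk_right i j)
      refine ⟨.cons hi (.cons hj.symm .nil), ?_, fun x => ?_⟩
      · simp [G.ne_of_adj hi, (G.ne_of_adj hj).symm, hf.ne h.ne]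
      · simp only [Walk.support_cons, Walk.support_nil, List.mem_cons, List.not_mem_nil,
          dif_pos he, Set.mem_singleton_iff]
        tauto
    · simp only [dif_neg he]
      exact hlong i j (hedge h he)
  · intro e he e' he' hne
    simp only [Function.onFun]
    split_ifs with h₁ h₂ h₂
    · exact Set.disjoint_singleton.2 (hg.ne fun h => hne (congrArg Subtype.val h))
    · exact Set.disjoint_singleton_left.2 (hgR _)
    · exact Set.disjoint_singleton_right.2 (hgR _)
    · exact absurd ((hedge he h₁).trans (hedge he' h₂).symm) hne
  · intro e _ i
    split_ifs
    · exact fun h => hgf _ ⟨i, h⟩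
    · simp [R]
  · intro x
    by_cases hx : x ∈ R
    · exact Or.inl ⟨e₀, he₀, by simp [hx]⟩
    · simp only [R, Set.mem_compl_iff, Set.mem_union, Set.mem_range, not_not] at hx
      rcases hx with ⟨e, rfl⟩ | ⟨i, rfl⟩
      · exact Or.inl ⟨e, mem_edgeFinset.1 (mem_of_mem_erase e.2), by simp⟩
      · exact Or.inr ⟨i, rfl⟩

theorem isSpanningSubdivisionIn_of_le_two_mul_degree [Fintype V] [Nonempty V]
    [DecidableRel G.Adj] [Fintype W] [LinearOrder W] [DecidableRel H.Adj]
    (hH : H.edgeSet.Nonempty)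
    (hG : ∀ v, Fintype.card V + Fintype.card W + #H.edgeFinset ≤ 2 * G.degree v) :
    IsSpanningSubdivisionIn G H := by
  classical
  obtain ⟨v₀⟩ := ‹Nonempty V›
  obtain ⟨f⟩ : Nonempty (W ↪ V) := Function.Embedding.nonempty_iff_card_le.2 (by
    have := hG v₀
    have := G.degree_lt_card_verts v₀
    omega)
  obtain ⟨e₀, he₀⟩ := hH
  have hE : #(H.edgeFinset.erase e₀) + 1 = #H.edgeFinset :=
    card_erase_add_one (mem_edgeFinset.2 he₀)
  obtain ⟨g, hg, hgE⟩ := exists_injective_commonNeighbor (G := G) f (H.edgeFinset.erase e₀)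
    fun i j => by
      have := degree_add_degree_le_card_add_card_inter (G := G) (f i) (f j)
      have := hG (f i)
      have := hG (f j)
      omega
  refine ⟨f, isSpanningSubdivisionWith_of_midpoints f.injective he₀ g hg (fun e => (hgE e).1)
    (fun e => (hgE e).2) fun i j hij => ?_⟩
  set S : Finset V := (univ.image g ∪ univ.image f)ᶜ
  have hS (v : V) : #S < 2 * #(G.neighborFinset v ∩ S) := by
    refine card_lt_two_mul_card_neighborFinset_inter ?_
    have := hG v
    have := card_union_le (univ.image g) (univ.image f)
    have : #(univ.image g) ≤ #(H.edgeFinset.erase e₀) := card_image_le.trans (by simp)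
    have : #(univ.image f) ≤ Fintype.card W := card_image_le
    rw [compl_compl]
    omega
  have hfS (k : W) : f k ∉ S := by simp [S]
  have hij' : i ≠ j := (H.mem_edgeSet.1 (hij ▸ he₀)).ne
  obtain ⟨p, hp, hsupp⟩ := exists_isPath_support_iff S (hfS i) (hfS j) (f.injective.ne hij')
    (fun v _ => (hS v).le) (by have := hS (f i); have := hS (f j); omega)
  exact ⟨p, hp, fun x => by simp [hsupp, S]⟩

end SimpleGraph

/-- **Main theorem.** For every `ε > 0` there is `C₀` such that for all `C ≥ C₀`, `n ≥ 2`
and `log n ≤ d < n`, every graph on `N = C·d·n` vertices with minimum degree at least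
`(1+ε)N/2` contains a spanning subdivision of every `n`-vertex `d`-regular graph. -/
theorem spanning_regular_subdivision :
    ∀ ε : ℝ, 0 < ε → ∃ C₀ : ℕ, 0 < C₀ ∧ ∀ C : ℕ, C₀ ≤ C → ∀ n : ℕ, 2 ≤ n →
      ∀ d : ℕ, Real.log n ≤ (d : ℝ) → d < n →
      ∀ (V : Type) [Fintype V] (G : SimpleGraph V) [DecidableRel G.Adj],
        Fintype.card V = C * d * n →
        (∀ v : V, (1 + ε) * (Fintype.card V : ℝ) / 2 ≤ (G.degree v : ℝ)) →
        ∀ (H : SimpleGraph (Fin n)) [DecidableRel H.Adj], H.IsRegularOfDegree d →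
          IsSpanningSubdivisionIn G H := by
  intro ε hε
  refine ⟨⌈2 / ε⌉₊ + 1, Nat.succ_pos _, fun C hC n hn d hlog _ V _ G _ hcard hdeg H _ hH => ?_⟩
  have hd : 0 < d := by
    have : 0 < Real.log n := Real.log_pos (by exact_mod_cast hn)
    exact_mod_cast this.trans_le hlog
  -- the surplus `ε N ≥ 2dn` of the degrees pays for the `n + dn/2` vertices and edges of `H`
  have hεC : 2 ≤ ε * C := by
    rw [← div_le_iff₀' hε]
    exact (Nat.le_ceil _).trans (by exact_mod_cast (Nat.le_succ _).trans hC)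
  have hedges : 2 * #H.edgeFinset = n * d := by
    rw [← H.sum_degrees_eq_twice_card_edges]
    simp [hH.degree_eq]
  have : Nonempty V := Fintype.card_pos_iff.1
    (by rw [hcard]; exact Nat.mul_pos (Nat.mul_pos (by omega) hd) (by omega))
  obtain ⟨j, hj⟩ := (H.degree_pos_iff_exists_adj ⟨0, by omega⟩).1 (by rw [hH.degree_eq]; exact hd)
  refine G.isSpanningSubdivisionIn_of_le_two_mul_degree ⟨s(_, _), hj⟩ fun v => ?_
  have hv : (C * d * n : ℝ) + 2 * (d * n) ≤ 2 * G.degree v := by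
    have := hdeg v
    rw [hcard] at this
    push_cast at this
    nlinarith [mul_le_mul_of_nonneg_right hεC (by positivity : (0 : ℝ) ≤ d * n)]
  have hv' : C * d * n + 2 * (d * n) ≤ 2 * G.degree v := by exact_mod_cast hv
  rw [hcard, Fintype.card_fin]
  nlinarith [Nat.le_mul_of_pos_right n hd]
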